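/- arXiv:1405.7820 — 2 statements merged into one kernel-verified Lean document; each statement's English description precedes it below -/
import Mathlib

section
/- Let t > r ≥ 1 and a, b > 0. Any x > 0 satisfying x^t ≤ a + b x^r also satisfies x^t ≤ e·a + ((2t−r)/(t−r))^{t/(t−r)} · b^{t/(t−r)}. -/
/-!
If `x^t ≤ e·a` there is nothing to prove. Otherwise `a < x^t / e`, so the hypothesis gives
`(1 - 1/e) x^t < b x^r`, and since `1 - 1/e > 1/2` this forces `x^(t-r) < 2b`. Raising to the power
`t/(t-r)` gives `x^t ≤ (2b)^(t/(t-r))`, and `2 ≤ (2t-r)/(t-r)`.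
-/

open Real

lemma lt_two_mul_of_le_add_of_exp_one_mul_lt {z a c : ℝ} (hz : 0 ≤ z) (h : z ≤ a + c)
    (ha : exp 1 * a < z) : z < 2 * c := by
  have he : 2 < exp 1 := lt_trans (by norm_num) exp_one_gt_d9
  nlinarith

lemma rpow_sub_lt_of_rpow_lt_mul_rpow {x r t c : ℝ} (hx : 0 < x) (h : x ^ t < c * x ^ r) :
    x ^ (t - r) < c := by
  rw [rpow_sub hx, div_lt_iff₀ (rpow_pos_of_pos hx r)]
  exact h

lemma rpow_le_rpow_div_of_rpow_le {x y s t : ℝ} (hx : 0 ≤ x) (hs : 0 < s) (ht : 0 ≤ t)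
    (h : x ^ s ≤ y) : x ^ t ≤ y ^ (t / s) := by
  calc x ^ t = (x ^ s) ^ (t / s) := by rw [← rpow_mul hx, mul_div_cancel₀ t hs.ne']
    _ ≤ y ^ (t / s) := rpow_le_rpow (rpow_nonneg hx s) h (div_nonneg ht hs.le)

/-- Let `t > r ≥ 1` and `a, b > 0`. Any `x > 0` satisfying `x^t ≤ a + b x^r`
also satisfies `x^t ≤ e·a + ((2t−r)/(t−r))^(t/(t−r)) · b^(t/(t−r))`. -/
theorem stmt_8 (t r a b x : ℝ) (hr : 1 ≤ r) (htr : r < t) (ha : 0 < a) (hb : 0 < b)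
    (hx : 0 < x) (h : x ^ t ≤ a + b * x ^ r) :
    x ^ t ≤ Real.exp 1 * a + ((2 * t - r) / (t - r)) ^ (t / (t - r)) * b ^ (t / (t - r)) := by
  have hs : 0 < t - r := sub_pos.mpr htr
  have hq : 0 ≤ t / (t - r) := div_nonneg (by linarith) hs.le
  have htwo : 2 ≤ (2 * t - r) / (t - r) := by rw [le_div_iff₀ hs]; linarith
  have hbq : 0 ≤ b ^ (t / (t - r)) := rpow_nonneg hb.le _
  by_cases hsmall : x ^ t ≤ exp 1 * a
  · have := mul_nonneg (rpow_nonneg (zero_le_two.trans htwo) (t / (t - r))) hbq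
    linarith
  have hlt : x ^ t < 2 * b * x ^ r := by
    rw [mul_assoc]
    exact lt_two_mul_of_le_add_of_exp_one_mul_lt (rpow_nonneg hx.le t) h (not_le.mp hsmall)
  calc x ^ t ≤ (2 * b) ^ (t / (t - r)) :=
        rpow_le_rpow_div_of_rpow_le hx.le hs (by linarith)
          (rpow_sub_lt_of_rpow_lt_mul_rpow hx hlt).le
    _ = 2 ^ (t / (t - r)) * b ^ (t / (t - r)) := mul_rpow zero_le_two hb.le
    _ ≤ ((2 * t - r) / (t - r)) ^ (t / (t - r)) * b ^ (t / (t - r)) := by gcongr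
    _ ≤ exp 1 * a + _ := le_add_of_nonneg_left (mul_pos (exp_pos 1) ha).le
end

section
/- For every z = u+iv with v > 0, every J ⊆ {1,…,n}, and in fact for every complex number w with Im w ≥ 0, one has |z + w + s(z)| ≥ Im w; in particular |z + m_n^{(J)}(z) + s(z)| ≥ Im m_n^{(J)}(z). Moreover there exists an absolute constant c0 > 0 such that for every z ∈ 𝔾, |z + m_n^{(J)}(z) + s(z)| ≥ c0 √|z²−4|. -/
open MeasureTheory

/-!
Everything follows from `Im s(z) > 0`. First, `Im (z + w + s) ≥ Im w`. Second, `W = z + 2 s`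
is a square root of `z² − 4` lying in the upper half-plane; when `|Re z| ≤ 2` (which holds on
`𝔾`) we have `Re W² = Re (z² − 4) ≤ 0`, so `W` lies in the sector `|Re W| ≤ Im W`, whence
`√|z² − 4| = |W| ≤ 2 Im W ≤ 4 Im (z + w + s)`.
-/

namespace Complex

theorem im_le_norm_add_add {z w t : ℂ} (hz : 0 ≤ z.im) (ht : 0 ≤ t.im) :
    w.im ≤ ‖z + w + t‖ :=
  calc w.im ≤ (z + w + t).im := by simp only [add_im]; linarith
    _ ≤ ‖z + w + t‖ := im_le_norm _

theorem abs_re_le_im_of_re_sq_nonpos {W : ℂ} (him : 0 ≤ W.im) (hre : (W ^ 2).re ≤ 0) :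
    |W.re| ≤ W.im := by
  have hsq : W.re ^ 2 ≤ W.im ^ 2 := by
    simp only [sq, mul_re] at hre ⊢
    linarith
  simpa [abs_of_nonneg him] using sq_le_sq.mp hsq

theorem norm_le_two_mul_im_of_re_sq_nonpos {W : ℂ} (him : 0 ≤ W.im) (hre : (W ^ 2).re ≤ 0) :
    ‖W‖ ≤ 2 * W.im :=
  calc ‖W‖ ≤ |W.re| + |W.im| := norm_le_abs_re_add_abs_im W
    _ ≤ 2 * W.im := by
      rw [abs_of_nonneg him]
      linarith [abs_re_le_im_of_re_sq_nonpos him hre]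

theorem re_sq_sub_four_nonpos {z : ℂ} (hz : |z.re| ≤ 2) : (z ^ 2 - 4).re ≤ 0 := by
  have : z.re ^ 2 ≤ 2 ^ 2 := sq_le_sq' (abs_le.mp hz).1 (abs_le.mp hz).2
  have hre : (z ^ 2 - 4).re = z.re ^ 2 - z.im ^ 2 - 4 := by
    simp [sq, mul_re]
  nlinarith [sq_nonneg z.im]

theorem add_two_mul_sq_of_quadratic {z t : ℂ} (h : t ^ 2 + z * t + 1 = 0) :
    (z + 2 * t) ^ 2 = z ^ 2 - 4 := by
  linear_combination 4 * h

theorem one_div_four_mul_sqrt_norm_sq_sub_four_le_norm_add_add {z w t : ℂ} (hz : 0 ≤ z.im)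
    (hzre : |z.re| ≤ 2) (hw : 0 ≤ w.im) (ht : 0 ≤ t.im) (hquad : t ^ 2 + z * t + 1 = 0) :
    1 / 4 * Real.sqrt ‖z ^ 2 - 4‖ ≤ ‖z + w + t‖ := by
  set W := z + 2 * t with hW
  have hWsq : W ^ 2 = z ^ 2 - 4 := add_two_mul_sq_of_quadratic hquad
  have hWim : W.im = z.im + 2 * t.im := by simp [hW]
  have hnormW : ‖W‖ ≤ 2 * W.im :=
    norm_le_two_mul_im_of_re_sq_nonpos (by linarith) (hWsq ▸ re_sq_sub_four_nonpos hzre)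
  have hsqrt : Real.sqrt ‖z ^ 2 - 4‖ = ‖W‖ := by
    rw [← hWsq, norm_pow, Real.sqrt_sq (norm_nonneg W)]
  calc 1 / 4 * Real.sqrt ‖z ^ 2 - 4‖ ≤ W.im / 2 := by rw [hsqrt]; linarith
    _ ≤ (z + w + t).im := by simp only [add_im]; linarith
    _ ≤ ‖z + w + t‖ := im_le_norm _

end Complex

theorem abs_le_of_neg_add_le_of_le_sub {x c ε : ℝ} (hε : 0 ≤ ε) (hlo : -c + ε ≤ x)
    (hhi : x ≤ c - ε) : |x| ≤ c :=
  abs_le.mpr ⟨by linarith, by linarith⟩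

/-- with `s` the Stieltjes transform of the semicircular law (the root of
`s² + z s + 1 = 0` with positive imaginary part in the upper half-plane):
for every `z` with `Im z > 0` and every `w` with `Im w ≥ 0` one has `|z + w + s(z)| ≥ Im w`
(in particular for `w = m_n^{(J)}(z)`); moreover there is an absolute constant `c0 > 0` such
that for every `z` in the region `𝔾` (with `v0 = A0/n`, `ε = (2 a v0)^{2/3}`,
`γ(z) = |2 − |Re z||`, `a` determined by `(1/π)∫_{|u|≤a} du/(u²+1) = 3/4`) and every such `w`,
`|z + w + s(z)| ≥ c0 √|z²−4|`. -/
theorem stmt_14 :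
    ∃ c0 : ℝ, 0 < c0 ∧
      ∀ s : ℂ → ℂ,
        (∀ z : ℂ, 0 < z.im → (s z) ^ 2 + z * s z + 1 = 0 ∧ 0 < (s z).im) →
        (∀ z w : ℂ, 0 < z.im → 0 ≤ w.im → w.im ≤ ‖z + w + s z‖) ∧
        (∀ (n : ℕ), 1 ≤ n → ∀ A0 a : ℝ, 0 < A0 → 0 < a →
          (1 / Real.pi) * (∫ u in Set.Icc (-a) a, 1 / (u ^ 2 + 1)) = 3 / 4 →
          ∀ z w : ℂ, 0 ≤ w.im →
            0 < z.im →
            -2 + (2 * a * (A0 / n)) ^ ((2 : ℝ) / 3) ≤ z.re →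
            z.re ≤ 2 - (2 * a * (A0 / n)) ^ ((2 : ℝ) / 3) →
            (A0 / n) / Real.sqrt (abs (2 - abs z.re)) ≤ z.im →
            c0 * Real.sqrt ‖z ^ 2 - 4‖ ≤ ‖z + w + s z‖) := by
  refine ⟨1 / 4, by norm_num, fun s hs => ⟨?_, ?_⟩⟩
  · intro z w hz _
    exact Complex.im_le_norm_add_add hz.le (hs z hz).2.le
  · intro n _ A0 a hA0 ha _ z w hw hz hlo hhi _
    have hε : 0 ≤ (2 * a * (A0 / n)) ^ ((2 : ℝ) / 3) := Real.rpow_nonneg (by positivity) _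
    exact Complex.one_div_four_mul_sqrt_norm_sq_sub_four_le_norm_add_add hz.le
      (abs_le_of_neg_add_le_of_le_sub hε hlo hhi) hw (hs z hz).2.le (hs z hz).1
end
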